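/- arXiv:1410.1763 — 2 statements merged into one kernel-verified Lean document; each statement's English description precedes it below -/
import Mathlib

section
/- Let E ⊂ H^n be an open set with smooth boundary ∂E in an open set Ω, u ∈ C^∞(Ω), and let N_{∂E} be the Riemannian unit normal. On the set of points p ∈ ∂E where ∇u(p) ≠ 0, ∇_H u(p) ≠ 0, and N_{∂E}(p) ≠ ±∇u(p)/|∇u(p)|_g, the following identity holds: (|N_{∂E}^H|_g² - ⟨N_{∂E}^H, ∇_H u / |∇_H u|_g⟩_g²) / (1 - ⟨N_{∂E}, ∇u/|∇u|_g⟩_g²) equals |N_{∂E^s}^{HΣ^s}|_g², where s = u(p), Σ^s = {u = s}, E^s = E ∩ Σ^s, N_{∂E^s} is the unit normal to ∂E^s within Σ^s obtained by normalizing the projection of N_{∂E} orthogonal to ∇u, and N_{∂E^s}^{HΣ^s} is its projection onto HΣ^s = H ∩ TΣ^s. -/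
open MeasureTheory Filter Set
open scoped ENNReal NNReal Topology

namespace Heis

/-- A point of the Heisenberg group `ℍⁿ ≅ ℝ^{2n+1}`, coordinates
`(x_1,…,x_n, y_1,…,y_n, t)`. -/
abbrev Hpt (n : ℕ) := EuclideanSpace ℝ (Fin (2*n+1))

/-- A horizontal vector, written in the orthonormal frame `X_1,…,X_n,Y_1,…,Y_n`. -/
abbrev HVec (n : ℕ) := EuclideanSpace ℝ (Fin (2*n))

noncomputable def mk (n : ℕ) (f : Fin (2*n+1) → ℝ) : Hpt n :=
  (EuclideanSpace.equiv (Fin (2*n+1)) ℝ).symm f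

noncomputable def mkH (n : ℕ) (f : Fin (2*n) → ℝ) : HVec n :=
  (EuclideanSpace.equiv (Fin (2*n)) ℝ).symm f

def tI (n : ℕ) : Fin (2*n+1) := ⟨2*n, by omega⟩
def xI (n : ℕ) (j : Fin n) : Fin (2*n+1) := ⟨j.1, by have := j.isLt; omega⟩
def yI (n : ℕ) (j : Fin n) : Fin (2*n+1) := ⟨n + j.1, by have := j.isLt; omega⟩

/-- The height function `𝗁(p) = p₁ = x₁`. -/
def hgt (n : ℕ) (p : Hpt n) : ℝ := p ⟨0, by omega⟩

/-- The Heisenberg group product. -/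
noncomputable def hmul (n : ℕ) (p q : Hpt n) : Hpt n :=
  mk n fun i => if i.1 = 2*n then
      p i + q i + 2 * ∑ j : Fin n, (p (yI n j) * q (xI n j) - p (xI n j) * q (yI n j))
    else p i + q i

/-- The Heisenberg group inverse. -/
noncomputable def hinv (n : ℕ) (p : Hpt n) : Hpt n := mk n fun i => -(p i)

/-- The anisotropic dilation `δ_λ(z,t) = (λz, λ²t)`. -/
noncomputable def dil (n : ℕ) (l : ℝ) (p : Hpt n) : Hpt n :=
  mk n fun i => if i.1 = 2*n then l^2 * p i else l * p i

/-- The point `s·e₁ = (s,0,…,0)`. -/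
noncomputable def sE1 (n : ℕ) (s : ℝ) : Hpt n := mk n fun i => if i.1 = 0 then s else 0

/-- `|z|²` for `p = (z,t)`. -/
def zSq (n : ℕ) (p : Hpt n) : ℝ := ∑ j : Fin n, ((p (xI n j))^2 + (p (yI n j))^2)

/-- The Korányi norm `‖(z,t)‖_K = (|z|⁴ + t²)^{1/4}`. -/
noncomputable def kNorm (n : ℕ) (p : Hpt n) : ℝ :=
  ((zSq n p)^2 + (p (tI n))^2) ^ ((1:ℝ)/4)

/-- The box norm `‖(z,t)‖_∞ = max(|z|, |t|^{1/2})`. -/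
noncomputable def boxNorm (n : ℕ) (p : Hpt n) : ℝ :=
  max (Real.sqrt (zSq n p)) (Real.sqrt |p (tI n)|)

/-- Korányi ball centered at the origin. -/
def ballK (n : ℕ) (r : ℝ) : Set (Hpt n) := {p | kNorm n p < r}

/-- Korányi ball centered at `p`. -/
def ballKc (n : ℕ) (p : Hpt n) (r : ℝ) : Set (Hpt n) := {q | kNorm n (hmul n (hinv n p) q) < r}

/-- Box-norm ball `U_r(p)`. -/
def uBall (n : ℕ) (p : Hpt n) (r : ℝ) : Set (Hpt n) := {q | boxNorm n (hmul n (hinv n p) q) < r}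

/-- The vertical hyperplane `𝕎 = {𝗁 = 0}`. -/
def Wset (n : ℕ) : Set (Hpt n) := {p | hgt n p = 0}

/-- The Korányi disk `D_r ⊂ 𝕎`. -/
def Ddisk (n : ℕ) (r : ℝ) : Set (Hpt n) := {p | hgt n p = 0 ∧ kNorm n p < r}

/-- The intrinsic cylinder `C_r = D_r ∗ (-r,r)`. -/
def cylC (n : ℕ) (r : ℝ) : Set (Hpt n) :=
  {q | ∃ w, (hgt n w = 0 ∧ kNorm n w < r) ∧ ∃ s : ℝ, -r < s ∧ s < r ∧ q = hmul n w (sE1 n s)}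

/-- Partial derivative along the `i`-th coordinate. -/
noncomputable def pd (n : ℕ) (i : Fin (2*n+1)) (u : Hpt n → ℝ) (p : Hpt n) : ℝ :=
  fderiv ℝ u p (EuclideanSpace.single i 1)

/-- `X_j u = ∂_{x_j} u + 2 y_j ∂_t u`. -/
noncomputable def Xd (n : ℕ) (j : Fin n) (u : Hpt n → ℝ) (p : Hpt n) : ℝ :=
  pd n (xI n j) u p + 2 * p (yI n j) * pd n (tI n) u p

/-- `Y_j u = ∂_{y_j} u - 2 x_j ∂_t u`. -/
noncomputable def Yd (n : ℕ) (j : Fin n) (u : Hpt n → ℝ) (p : Hpt n) : ℝ :=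
  pd n (yI n j) u p - 2 * p (xI n j) * pd n (tI n) u p

/-- `T u = ∂_t u`. -/
noncomputable def Td (n : ℕ) (u : Hpt n → ℝ) (p : Hpt n) : ℝ := pd n (tI n) u p

/-- The `j`-th horizontal derivative (`X` for `j < n`, `Y` otherwise). -/
noncomputable def hDeriv (n : ℕ) (j : Fin (2*n)) (u : Hpt n → ℝ) (p : Hpt n) : ℝ :=
  if h : j.1 < n then Xd n ⟨j.1, h⟩ u p
  else Yd n ⟨j.1 - n, by have := j.isLt; omega⟩ u p

/-- The horizontal gradient `∇_H u` in frame coordinates. -/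
noncomputable def hGrad (n : ℕ) (u : Hpt n → ℝ) (p : Hpt n) : HVec n :=
  mkH n fun i => hDeriv n i u p

/-- The full Riemannian gradient `∇u` in frame coordinates. -/
noncomputable def fGrad (n : ℕ) (u : Hpt n → ℝ) (p : Hpt n) : Hpt n :=
  mk n fun i => if h : i.1 < 2*n then hDeriv n ⟨i.1, h⟩ u p else Td n u p

/-- The Euclidean (coordinate) gradient. -/
noncomputable def eGrad (n : ℕ) (u : Hpt n → ℝ) (p : Hpt n) : Hpt n :=
  mk n fun i => pd n i u p

/-- Horizontal divergence `div_g φ = Σ_j X_j φ_j + Y_j φ_{n+j}`. -/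
noncomputable def hdiv (n : ℕ) (φ : Hpt n → HVec n) (p : Hpt n) : ℝ :=
  ∑ j : Fin n,
    (Xd n j (fun q => φ q ⟨j.1, by have := j.isLt; omega⟩) p
      + Yd n j (fun q => φ q ⟨n + j.1, by have := j.isLt; omega⟩) p)

/-- Embedding of a horizontal vector into the full frame. -/
noncomputable def embedH (n : ℕ) (v : HVec n) : Hpt n :=
  mk n fun i => if h : i.1 < 2*n then v ⟨i.1, h⟩ else 0

/-- Horizontal part of a full frame vector. -/
noncomputable def hpart (n : ℕ) (v : Hpt n) : HVec n :=
  mkH n fun i => v ⟨i.1, by have := i.isLt; omega⟩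

/-- Real inner product. -/
noncomputable def rinner {E : Type*} [NormedAddCommGroup E] [InnerProductSpace ℝ E]
    (x y : E) : ℝ := inner ℝ x y

/-- Admissible test vector fields for the `H`-perimeter in `A`. -/
def Admissible (n : ℕ) (A : Set (Hpt n)) (φ : Hpt n → HVec n) : Prop :=
  ContDiff ℝ 1 φ ∧ HasCompactSupport φ ∧ tsupport φ ⊆ A ∧ ∀ p, ‖φ p‖ ≤ 1

/-- The variational `H`-perimeter of `E` in `A`. -/
noncomputable def hPer (n : ℕ) (E A : Set (Hpt n)) : ℝ≥0∞ :=
  ⨆ (φ : Hpt n → HVec n) (_ : Admissible n A φ),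
    ENNReal.ofReal (∫ p in E, hdiv n φ p)

/-- `E` has locally finite `H`-perimeter in `Ω`. -/
def LocFinitePer (n : ℕ) (Ω E : Set (Hpt n)) : Prop :=
  ∀ A : Set (Hpt n), IsOpen A → IsCompact (closure A) → closure A ⊆ Ω → hPer n E A < ⊤

/-- `(μ, ν)` represents the `H`-perimeter measure and horizontal inner normal of `E`
in `Ω` (Gauss–Green / Riesz representation). -/
def IsPerimRep (n : ℕ) (Ω E : Set (Hpt n)) (μ : Measure (Hpt n)) (ν : Hpt n → HVec n) : Prop :=
  (∀ᵐ p ∂μ, ‖ν p‖ = 1) ∧ μ Ωᶜ = 0 ∧ (∀ K, IsCompact K → K ⊆ Ω → μ K < ⊤) ∧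
  ∀ φ : Hpt n → HVec n, ContDiff ℝ 1 φ → HasCompactSupport φ → tsupport φ ⊆ Ω →
    ∫ p, rinner (φ p) (ν p) ∂μ = -∫ p in E, hdiv n φ p

/-- The horizontal vector `ν = -X₁`. -/
noncomputable def nuNeg (n : ℕ) : HVec n := mkH n fun i => if i.1 = 0 then -1 else 0

/-- The horizontal vector `X₁`. -/
noncomputable def eX1 (n : ℕ) : HVec n := mkH n fun i => if i.1 = 0 then 1 else 0

/-- The cylindrical excess of `(μ,ν)` in `C_r`, with respect to `ν₀ = -X₁`. -/
noncomputable def excess (n : ℕ) (μ : Measure (Hpt n)) (ν : Hpt n → HVec n) (r : ℝ) : ℝ :=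
  (2 * r^(2*n+1))⁻¹ * ∫ p in cylC n r, ‖ν p - nuNeg n‖^2 ∂μ

/-- The measure-theoretic boundary of `E`. -/
def mBdry (n : ℕ) (E : Set (Hpt n)) : Set (Hpt n) :=
  {p | ∀ ρ : ℝ, 0 < ρ → 0 < volume (E ∩ ballKc n p ρ) ∧ 0 < volume (ballKc n p ρ \ E)}

/-- The `H`-reduced boundary associated with a perimeter representation `(μ,ν)`. -/
noncomputable def reducedBdry (n : ℕ) (μ : Measure (Hpt n)) (ν : Hpt n → HVec n) :
    Set (Hpt n) :=
  {p | (∀ ρ : ℝ, 0 < ρ → 0 < μ (uBall n p ρ)) ∧ ‖ν p‖ = 1 ∧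
    Tendsto (fun ρ : ℝ => (μ (uBall n p ρ)).toReal⁻¹ • ∫ q in uBall n p ρ, ν q ∂μ)
      (nhdsWithin 0 (Ioi 0)) (nhds (ν p))}

/-- `E` is a `(Λ,r)`-minimum of the `H`-perimeter in `Ω`. -/
def LambdaMin (n : ℕ) (Λ : ℝ) (r : ℝ≥0∞) (Ω E : Set (Hpt n)) : Prop :=
  LocFinitePer n Ω E ∧
  ∀ (F : Set (Hpt n)) (p : Hpt n) (s : ℝ), 0 < s → ENNReal.ofReal s < r →
    MeasurableSet F →
    IsCompact (closure (symmDiff E F)) → closure (symmDiff E F) ⊆ ballKc n p s →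
    IsCompact (closure (ballKc n p s)) → closure (ballKc n p s) ⊆ Ω →
    hPer n E (ballKc n p s) ≤ hPer n F (ballKc n p s) +
      ENNReal.ofReal Λ * volume (symmDiff E F)

/-- The spherical Hausdorff-type measure `𝒮^s` built from box-norm balls
(normalization constant omitted). -/
noncomputable def sMeas (n : ℕ) (s : ℝ) (E : Set (Hpt n)) : ℝ≥0∞ :=
  ⨆ (δ : ℝ) (_ : 0 < δ), ⨅ (c : ℕ → Hpt n) (r : ℕ → ℝ)
    (_ : (∀ i, 0 < r i ∧ r i < δ) ∧ E ⊆ ⋃ i, uBall n (c i) (r i)),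
    ∑' i, ENNReal.ofReal (r i ^ s)

/-- `f` is of class `C¹_H` on the open set `U`, with continuous horizontal
gradient `gf` (in the distributional sense). -/
def IsC1H (n : ℕ) (U : Set (Hpt n)) (f : Hpt n → ℝ) (gf : Hpt n → HVec n) : Prop :=
  ContinuousOn f U ∧ ContinuousOn gf U ∧
  ∀ φ : Hpt n → ℝ, ContDiff ℝ 1 φ → HasCompactSupport φ → tsupport φ ⊆ U →
    ∀ j : Fin (2*n), ∫ p in U, gf p j * φ p = -∫ p in U, f p * hDeriv n j φ p

/-- `S` is an `H`-regular hypersurface. -/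
def HRegular (n : ℕ) (S : Set (Hpt n)) : Prop :=
  ∀ p ∈ S, ∃ r : ℝ, 0 < r ∧ ∃ f gf, IsC1H n (uBall n p r) f gf ∧
    S ∩ uBall n p r = {q ∈ uBall n p r | f q = 0} ∧ gf p ≠ 0

/-- `S` is an `H`-regular hypersurface with horizontal unit normal `ν`. -/
def HRegularNormal (n : ℕ) (S : Set (Hpt n)) (ν : Hpt n → HVec n) : Prop :=
  ∀ p ∈ S, ∃ r : ℝ, 0 < r ∧ ∃ f gf, IsC1H n (uBall n p r) f gf ∧
    S ∩ uBall n p r = {q ∈ uBall n p r | f q = 0} ∧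
    ∀ q ∈ S ∩ uBall n p r, gf q ≠ 0 ∧ ν q = ‖gf q‖⁻¹ • gf q

/-- `R` is `𝒮^{2n+1}`-rectifiable. -/
def SRect (n : ℕ) (R : Set (Hpt n)) : Prop :=
  ∃ S : ℕ → Set (Hpt n), (∀ j, HRegular n (S j)) ∧
    sMeas n (2*n+1) (R \ ⋃ j, S j) = 0

/-- `ν` is a horizontal unit normal of the `𝒮^{2n+1}`-rectifiable set `R`,
obtained from a covering by `H`-regular hypersurfaces. -/
def IsRectNormal (n : ℕ) (R : Set (Hpt n)) (ν : Hpt n → HVec n) : Prop :=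
  ∃ (S : ℕ → Set (Hpt n)) (νs : ℕ → Hpt n → HVec n),
    (∀ j, HRegularNormal n (S j) (νs j)) ∧
    sMeas n (2*n+1) (R \ ⋃ j, S j) = 0 ∧
    ∀ j, ∀ p ∈ R ∩ S j, (∀ i < j, p ∉ S i) → ν p = νs j p

/-- The Riemannian surface measure `σ` of the level set `{u = s}`, expressed via the
Euclidean `2n`-dimensional Hausdorff measure with density `‖∇_g u‖_g / ‖∇_euc u‖`. -/
noncomputable def levelMeasure (n : ℕ) (u : Hpt n → ℝ) (s : ℝ) : Measure (Hpt n) :=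
  ((μH[(2*(n:ℝ))] : Measure (Hpt n)).restrict (u ⁻¹' {s})).withDensity
    fun p => ENNReal.ofReal (‖fGrad n u p‖ / ‖eGrad n u p‖)

/-- Admissible sections of `HΣ^s`, `Σ^s = {u = s}`: horizontal, tangent, `C¹_c(A)`,
with `g`-norm at most 1. -/
def SliceAdmissible (n : ℕ) (u : Hpt n → ℝ) (s : ℝ) (A : Set (Hpt n))
    (φ : Hpt n → HVec n) : Prop :=
  ContDiff ℝ 1 φ ∧ HasCompactSupport φ ∧ tsupport φ ⊆ A ∧ (∀ p, ‖φ p‖ ≤ 1) ∧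
  ∀ p, u p = s → rinner (φ p) (hGrad n u p) = 0

/-- The `H`-perimeter of `E ∩ Σ^s` inside the hypersurface `Σ^s = {u = s}`,
relative to `A`. -/
noncomputable def slicePer (n : ℕ) (u : Hpt n → ℝ) (s : ℝ) (E A : Set (Hpt n)) : ℝ≥0∞ :=
  ⨆ (φ : Hpt n → HVec n) (_ : SliceAdmissible n u s A φ),
    ENNReal.ofReal (∫ p in E, hdiv n φ p ∂(levelMeasure n u s))

/-- `g`-orthogonal projection of a full tangent vector field `N` onto `HΣ`,
`Σ = {f = 0}`. -/
noncomputable def projHSigma (n : ℕ) (f : Hpt n → ℝ) (N : Hpt n → Hpt n) (p : Hpt n) :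
    HVec n :=
  hpart n (N p) -
    (rinner (hpart n (N p)) (hGrad n f p) / ‖hGrad n f p‖^2) • hGrad n f p

/-- The group projection `π : ℍⁿ → 𝕎`, `p = π(p) ∗ (𝗁(p)e₁)`. -/
noncomputable def projW (n : ℕ) (p : Hpt n) : Hpt n := hmul n p (sE1 n (-(hgt n p)))

/-- Identification of `𝕎` with `ℝ^{2n}` by dropping the first coordinate. -/
noncomputable def dropFirst (n : ℕ) (p : Hpt n) : HVec n :=
  mkH n fun i => p ⟨i.1 + 1, by have := i.isLt; omega⟩

/-- `|ẑ|²`, the squared norm of `(z₂,…,z_n)`. -/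
def hatZSq (n : ℕ) (p : Hpt n) : ℝ :=
  ∑ j : Fin n, if j.1 = 0 then 0 else ((p (xI n j))^2 + (p (yI n j))^2)

/-- The domain `Ω_s = (-se₁) ∗ D₁ ∗ (se₁) ⊂ 𝕎`. -/
def OmegaS (n : ℕ) (s : ℝ) : Set (Hpt n) :=
  {p | hgt n p = 0 ∧
    ((p ⟨n, by omega⟩)^2 + hatZSq n p)^2 + (p (tI n) - 4*s*(p ⟨n, by omega⟩))^2 < 1}

/-- Admissible sections for the horizontal perimeter in the slice `{𝗁 = s}`:
no `X₁`-component. -/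
def WAdmissible (n : ℕ) (A : Set (Hpt n)) (φ : Hpt n → HVec n) : Prop :=
  ContDiff ℝ 1 φ ∧ HasCompactSupport φ ∧ tsupport φ ⊆ A ∧ (∀ p, ‖φ p‖ ≤ 1) ∧
  ∀ p, ∀ i : Fin (2*n), i.1 = 0 → φ p i = 0

/-- The horizontal perimeter `μ_F^s` of `F` in the slice `{𝗁 = s}`, relative to `A`. -/
noncomputable def wPer (n : ℕ) (s : ℝ) (F A : Set (Hpt n)) : ℝ≥0∞ :=
  ⨆ (φ : Hpt n → HVec n) (_ : WAdmissible n A φ),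
    ENNReal.ofReal (∫ p in F, hdiv n φ p ∂((μH[(2*(n:ℝ))] : Measure (Hpt n)).restrict
      {q | hgt n q = s}))


open scoped RealInnerProductSpace



lemma abstract_identity {E : Type*} [NormedAddCommGroup E] [InnerProductSpace ℝ E]
    (h T N g : E) (t : ℝ) (hg : g = h + t • T)
    (hhT : ⟪h, T⟫ = 0) (hT : ‖T‖ = 1) (hN : ‖N‖ = 1) (hh : h ≠ 0)
    (hne1 : N ≠ ‖g‖⁻¹ • g) (hne2 : N ≠ -(‖g‖⁻¹ • g)) :
    (‖N - ⟪N, T⟫ • T‖ ^ 2 - ⟪N - ⟪N, T⟫ • T, ‖h‖⁻¹ • h⟫ ^ 2) /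
        (1 - ⟪N, ‖g‖⁻¹ • g⟫ ^ 2)
      = 1 - ⟪‖N - ⟪N, ‖g‖⁻¹ • g⟫ • (‖g‖⁻¹ • g)‖⁻¹ •
          (N - ⟪N, ‖g‖⁻¹ • g⟫ • (‖g‖⁻¹ • g)),
          (t / ‖g‖) • (‖h‖⁻¹ • h) - (‖h‖ / ‖g‖) • T⟫ ^ 2 := by
  have hH : (0:ℝ) < ‖h‖ := norm_pos_iff.2 hh
  have hGsq : ‖g‖ ^ 2 = ‖h‖ ^ 2 + t ^ 2 := by
    rw [hg, norm_add_sq_real, real_inner_smul_right, hhT, norm_smul, hT]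
    simp [mul_pow, sq_abs]
  have hG : (0:ℝ) < ‖g‖ := by nlinarith [norm_nonneg g]
  set H := ‖h‖ with hHdef
  set G := ‖g‖ with hGdef
  set τ := ⟪N, T⟫ with hτ
  have hNh : ⟪N, h⟫ = ⟪N, ‖h‖⁻¹ • h⟫ * H := by
    rw [real_inner_smul_right]; field_simp
    rfl
  set α := ⟪N, ‖h‖⁻¹ • h⟫ with hα
  have hNg : ⟪N, g⟫ = H * α + t * τ := by
    rw [hg, inner_add_right, real_inner_smul_right, hNh, ← hτ]; ring
  have hc : ⟪N, ‖g‖⁻¹ • g⟫ = (H * α + t * τ) / G := by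
    rw [real_inner_smul_right, hNg]; field_simp
    exact mul_div_cancel_right₀ _ hG.ne'
  set c := ⟪N, ‖g‖⁻¹ • g⟫ with hcd
  have hgh1 : ‖(‖g‖⁻¹ • g)‖ = 1 := by
    rw [norm_smul, norm_inv, norm_norm]
    field_simp
    exact div_self hG.ne'
  have hc1 : c < 1 := by
    rw [hcd]
    exact (inner_lt_one_iff_real_of_norm_eq_one hN hgh1).2 hne1
  have hcm1 : -1 < c := by
    have := (inner_lt_one_iff_real_of_norm_eq_one hN (by rw [norm_neg]; exact hgh1)).2
      (by simpa using hne2)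
    rw [inner_neg_right] at this
    linarith
  have hd : (0:ℝ) < 1 - c ^ 2 := by nlinarith
  have hNH : ‖N - τ • T‖ ^ 2 = 1 - τ ^ 2 := by
    rw [norm_sub_sq_real, real_inner_smul_right, norm_smul, hN, hT]
    simp [mul_pow, sq_abs]; ring
  have hTh : ⟪T, h⟫ = 0 := by rw [real_inner_comm]; exact hhT
  have hThat : ⟪T, ‖h‖⁻¹ • h⟫ = 0 := by
    rw [real_inner_smul_right, hTh, mul_zero]
  have hNHh : ⟪N - τ • T, ‖h‖⁻¹ • h⟫ = α := by
    rw [inner_sub_left, real_inner_smul_left, hThat]; simp [hα]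
  have hNs : ‖N - c • (‖g‖⁻¹ • g)‖ ^ 2 = 1 - c ^ 2 := by
    rw [norm_sub_sq_real, real_inner_smul_right, norm_smul, hN, hgh1, ← hcd]
    simp [sq_abs]; ring
  set W := (t / G) • (‖h‖⁻¹ • h) - (H / G) • T with hW
  have hgW0 : ⟪g, W⟫ = 0 := by
    simp only [hW, hg, inner_sub_right, inner_add_left, real_inner_smul_left,
      real_inner_smul_right, hhT, hTh, real_inner_self_eq_norm_sq, hT, ← hHdef]
    field_simp
    ring
  have hgW : ⟪‖g‖⁻¹ • g, W⟫ = 0 := by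
    rw [real_inner_smul_left, hgW0, mul_zero]
  have hNW : ⟪N, W⟫ = (t / G) * α - (H / G) * τ := by
    simp only [hW, inner_sub_right, real_inner_smul_right, ← hτ]
    rw [hNh]
    field_simp
    rfl
  have hNsW : ⟪‖N - c • (‖g‖⁻¹ • g)‖⁻¹ • (N - c • (‖g‖⁻¹ • g)), W⟫
      = ‖N - c • (‖g‖⁻¹ • g)‖⁻¹ * ((t / G) * α - (H / G) * τ) := by
    rw [real_inner_smul_left, inner_sub_left, real_inner_smul_left, hgW, hNW]
    ring
  have hnorm2 : (‖N - c • (‖g‖⁻¹ • g)‖⁻¹) ^ 2 = (1 - c ^ 2)⁻¹ := by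
    rw [inv_pow, hNs]
  have hX : ((t / G) * α - (H / G) * τ) ^ 2 = (t * α - H * τ) ^ 2 / G ^ 2 := by
    field_simp
  have key : (1 : ℝ) - τ ^ 2 - α ^ 2 = (1 - c ^ 2) - (t * α - H * τ) ^ 2 / G ^ 2 := by
    have step1 : (1 - c ^ 2) - (t * α - H * τ) ^ 2 / G ^ 2
        = 1 - ((H * α + t * τ) ^ 2 + (t * α - H * τ) ^ 2) / G ^ 2 := by
      rw [hc]; field_simp; ring
    have poly : (H * α + t * τ) ^ 2 + (t * α - H * τ) ^ 2
        = (H ^ 2 + t ^ 2) * (α ^ 2 + τ ^ 2) := by ring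
    rw [step1, poly, ← hGsq]
    field_simp
    ring
  rw [hNH, hNHh, hNsW, mul_pow, hnorm2, hX, key]
  field_simp


/-- the algebraic identity relating the sliced normal and the
horizontal projections (Step 3 of the smooth coarea lemma). -/
theorem sliced_normal_identity (n : ℕ) (hn : 0 < n) (Ω : Set (Hpt n)) (hΩ : IsOpen Ω)
    (u : Hpt n → ℝ) (hu : ContDiffOn ℝ (⊤ : ℕ∞) u Ω) (p : Hpt n) (hp : p ∈ Ω)
    (N : Hpt n) (hNnorm : ‖N‖ = 1)
    (hgu : fGrad n u p ≠ 0) (hhu : hGrad n u p ≠ 0)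
    (hne : N ≠ ‖fGrad n u p‖⁻¹ • fGrad n u p ∧ N ≠ -(‖fGrad n u p‖⁻¹ • fGrad n u p)) :
    let g := fGrad n u p
    let hv := embedH n (hGrad n u p)
    let Tv : Hpt n := EuclideanSpace.single (tI n) 1
    let NH := N - rinner N Tv • Tv
    let Ns := ‖N - rinner N (‖g‖⁻¹ • g) • (‖g‖⁻¹ • g)‖⁻¹ •
      (N - rinner N (‖g‖⁻¹ • g) • (‖g‖⁻¹ • g))
    let W := (Td n u p / ‖g‖) • (‖hv‖⁻¹ • hv) - (‖hv‖ / ‖g‖) • Tv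
    (‖NH‖^2 - rinner NH (‖hv‖⁻¹ • hv) ^ 2) / (1 - rinner N (‖g‖⁻¹ • g) ^ 2)
      = 1 - rinner Ns W ^ 2 := by
  have hTv1 : ‖(EuclideanSpace.single (tI n) 1 : Hpt n)‖ = 1 := by simp
  have hvtI : embedH n (hGrad n u p) (tI n) = 0 := by
    show (if h : (tI n).1 < 2*n then hGrad n u p ⟨(tI n).1, h⟩ else 0) = 0
    rw [dif_neg (by simp [tI])]
  have horth : (inner ℝ (embedH n (hGrad n u p))
      (EuclideanSpace.single (tI n) 1 : Hpt n) : ℝ) = 0 := by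
    rw [EuclideanSpace.inner_single_right]
    simp [hvtI]
  have hsum : fGrad n u p = embedH n (hGrad n u p)
      + Td n u p • (EuclideanSpace.single (tI n) 1 : Hpt n) := by
    apply PiLp.ext; intro i
    show (if h : i.1 < 2*n then hDeriv n ⟨i.1, h⟩ u p else Td n u p)
      = (if h : i.1 < 2*n then hGrad n u p ⟨i.1, h⟩ else 0)
        + Td n u p * (EuclideanSpace.single (tI n) (1:ℝ)) i
    rw [EuclideanSpace.single_apply]
    by_cases h : i.1 < 2*n
    · have hne : i ≠ tI n := by
        intro e
        rw [e] at h
        simp [tI] at h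
      rw [dif_pos h, dif_pos h, if_neg hne]
      have e1 : hGrad n u p ⟨i.1, h⟩ = hDeriv n ⟨i.1, h⟩ u p := rfl
      rw [e1]; ring
    · have he : i = tI n := by
        apply Fin.ext
        have := i.isLt
        show i.1 = 2*n
        omega
      rw [dif_neg h, dif_neg h, if_pos he]
      ring
  have hvne : embedH n (hGrad n u p) ≠ 0 := by
    intro h0
    apply hhu
    apply PiLp.ext; intro j
    have hj : (j.1 : ℕ) < 2*n+1 := by have := j.isLt; omega
    have hc : embedH n (hGrad n u p) ⟨j.1, hj⟩ = (0 : Hpt n) ⟨j.1, hj⟩ := by rw [h0]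
    have e2 : embedH n (hGrad n u p) ⟨j.1, hj⟩ = hGrad n u p j := by
      show (if h : j.1 < 2*n then hGrad n u p ⟨j.1, h⟩ else 0) = hGrad n u p j
      rw [dif_pos j.isLt]
    rw [e2] at hc
    exact hc
  exact abstract_identity (embedH n (hGrad n u p)) (EuclideanSpace.single (tI n) 1) N
    (fGrad n u p) (Td n u p) hsum horth hTv1 hNnorm hvne hne.1 hne.2

end Heis
end

section
/- Let R = {(x,y,t) ∈ H^1 : x = 0} and u(x,y,t) = t - 2xy on H^1. Then ∇u = -4xY + T and ∇_H u = -4xY, so that {p ∈ R : ∇_H u(p) = 0 and ∇u(p) ≠ 0} = R, and S^3(R) = ∞. In particular, the statement 'the set where ∇_H u vanishes but ∇u does not is S^{2n+1}-negligible on rectifiable sets' fails for n = 1. -/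
/-!
The function `u = t - 2xy` has `Xu = 0`, `Yu = -4x` and `Tu = 1`, so every point of the plane
`{x = 0}` is characteristic for `u`. In the coordinates `(y, t)` of that plane, a box ball
`U_r(c)` meets it inside a rectangle of area `12 r³`: the `y`-side has length `2r`, and the
`t`-side, of length `6r²`, absorbs the twist `2 x_c (y - y_c)` of the group law. Hence any
countable cover of the plane by box balls of radii `rᵢ` gives `∞ = area ≤ 12 ∑ rᵢ³`, and so
`𝒮³({x = 0}) = ∞`.
-/

open MeasureTheory Filter Set
open scoped ENNReal NNReal Topology

namespace Heis

noncomputable def tSubTwoXY (p : Hpt 1) : ℝ := p 2 - 2 * p 0 * p 1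

theorem fderiv_tSubTwoXY_apply (p v : Hpt 1) :
    fderiv ℝ tSubTwoXY p v = v 2 - 2 * (p 0 * v 1 + v 0 * p 1) := by
  have hproj (i : Fin 3) : HasFDerivAt (fun q : Hpt 1 => q i)
      (EuclideanSpace.proj (𝕜 := ℝ) i : Hpt 1 →L[ℝ] ℝ) p :=
    (EuclideanSpace.proj (𝕜 := ℝ) i).hasFDerivAt
  have hu : HasFDerivAt tSubTwoXY _ p := (hproj 2).sub (((hproj 0).const_mul 2).mul (hproj 1))
  rw [hu.fderiv]
  simp only [sub_apply, PiLp.proj_apply, add_apply, smul_apply, smul_eq_mul]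
  ring

theorem Xd_tSubTwoXY (p : Hpt 1) : Xd 1 0 tSubTwoXY p = 0 := by
  simp [Xd, pd, fderiv_tSubTwoXY_apply, xI, yI, tI]

theorem Yd_tSubTwoXY (p : Hpt 1) : Yd 1 0 tSubTwoXY p = -4 * p 0 := by
  simp [Yd, pd, fderiv_tSubTwoXY_apply, xI, yI, tI]
  ring

theorem Td_tSubTwoXY (p : Hpt 1) : Td 1 tSubTwoXY p = 1 := by
  simp [Td, pd, fderiv_tSubTwoXY_apply, tI]

theorem hGrad_tSubTwoXY (p : Hpt 1) :
    hGrad 1 tSubTwoXY p = mkH 1 (fun i => if i.1 = 1 then -4 * p 0 else 0) := by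
  ext i
  fin_cases i <;> simp [hGrad, hDeriv, mkH, Xd_tSubTwoXY, Yd_tSubTwoXY]

theorem fGrad_tSubTwoXY (p : Hpt 1) :
    fGrad 1 tSubTwoXY p =
      mk 1 (fun i => if i.1 = 1 then -4 * p 0 else if i.1 = 2 then 1 else 0) := by
  ext i
  fin_cases i <;> simp [fGrad, hDeriv, mk, Xd_tSubTwoXY, Yd_tSubTwoXY, Td_tSubTwoXY]

theorem hGrad_tSubTwoXY_eq_zero_iff (p : Hpt 1) : hGrad 1 tSubTwoXY p = 0 ↔ p 0 = 0 := by
  rw [hGrad_tSubTwoXY]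
  constructor
  · intro h
    simpa [mkH] using congrArg (· 1) h
  · intro h
    ext i
    simp [mkH, h]

theorem fGrad_tSubTwoXY_ne_zero (p : Hpt 1) : fGrad 1 tSubTwoXY p ≠ 0 := fun h => by
  simpa [fGrad_tSubTwoXY, mk] using congrArg (· 2) h

theorem tsum_eq_top_of_univ_subset_iUnion {α ι : Type*} [MeasurableSpace α] [Countable ι]
    {μ : Measure α} (hμ : μ univ = ⊤) {B : ι → Set α} (hB : univ ⊆ ⋃ i, B i)
    {C : ℝ≥0∞} (hC : C ≠ ⊤) {a : ι → ℝ≥0∞} (hBa : ∀ i, μ (B i) ≤ C * a i) :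
    ∑' i, a i = ⊤ := by
  by_contra ha
  refine (ENNReal.mul_ne_top hC ha) (top_le_iff.1 ?_)
  calc ⊤ = μ univ := hμ.symm
    _ ≤ μ (⋃ i, B i) := measure_mono hB
    _ ≤ ∑' i, μ (B i) := measure_iUnion_le B
    _ ≤ ∑' i, C * a i := ENNReal.tsum_le_tsum hBa
    _ = C * ∑' i, a i := ENNReal.tsum_mul_left

theorem volume_Ioo_prod_Ioo_centered (y₀ t₀ : ℝ) {r : ℝ} (hr : 0 ≤ r) :
    volume (Ioo (y₀ - r) (y₀ + r) ×ˢ Ioo (t₀ - 3 * r ^ 2) (t₀ + 3 * r ^ 2)) =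
      12 * ENNReal.ofReal (r ^ 3) := by
  rw [Measure.volume_eq_prod, Measure.prod_prod, Real.volume_Ioo, Real.volume_Ioo,
    ← ENNReal.ofReal_mul (by linarith), show (12 : ℝ≥0∞) = ENNReal.ofReal 12 by simp,
    ← ENNReal.ofReal_mul (by norm_num)]
  congr 1
  ring

theorem volume_univ_prod_eq_top : volume (univ : Set (ℝ × ℝ)) = ⊤ := by
  rw [← univ_prod_univ, Measure.volume_eq_prod, Measure.prod_prod, Real.volume_univ,
    ENNReal.top_mul_top]

theorem boxNorm_hinv_hmul_vertical (c : Hpt 1) (y t : ℝ) :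
    boxNorm 1 (hmul 1 (hinv 1 c) !₂[0, y, t]) =
      max √(c 0 ^ 2 + (y - c 1) ^ 2) √|t - c 2 + 2 * c 0 * y| := by
  simp [boxNorm, zSq, hmul, hinv, mk, xI, yI, tI]
  ring_nf

theorem mem_rectangle_of_vertical_mem_uBall {c : Hpt 1} {r y t : ℝ} (hr : 0 < r)
    (h : !₂[0, y, t] ∈ uBall 1 c r) :
    (y, t) ∈ Ioo (c 1 - r) (c 1 + r) ×ˢ
      Ioo (c 2 - 2 * c 0 * c 1 - 3 * r ^ 2) (c 2 - 2 * c 0 * c 1 + 3 * r ^ 2) := by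
  have h' : boxNorm 1 (hmul 1 (hinv 1 c) !₂[0, y, t]) < r := h
  rw [boxNorm_hinv_hmul_vertical, max_lt_iff, Real.sqrt_lt' hr, Real.sqrt_lt' hr] at h'
  obtain ⟨hz, ht⟩ := h'
  have hx : |c 0| < r := abs_lt_of_sq_lt_sq (by nlinarith) hr.le
  have hy : |y - c 1| < r := abs_lt_of_sq_lt_sq (by nlinarith) hr.le
  have hxy : |2 * c 0 * (y - c 1)| ≤ 2 * r ^ 2 := by
    rw [abs_mul, abs_mul, abs_two]
    nlinarith [abs_nonneg (c 0), abs_nonneg (y - c 1)]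
  have htwist := abs_sub (t - c 2 + 2 * c 0 * y) (2 * c 0 * (y - c 1))
  obtain ⟨hy₁, hy₂⟩ := abs_lt.1 hy
  obtain ⟨ht₁, ht₂⟩ := abs_lt.1 (show |t - (c 2 - 2 * c 0 * c 1)| < 3 * r ^ 2 by
    rw [show t - (c 2 - 2 * c 0 * c 1) = t - c 2 + 2 * c 0 * y - 2 * c 0 * (y - c 1) by ring]
    linarith)
  exact ⟨⟨by linarith, by linarith⟩, ⟨by linarith, by linarith⟩⟩

theorem tsum_rpow_three_eq_top_of_vertical_plane_subset {c : ℕ → Hpt 1} {r : ℕ → ℝ}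
    (hr : ∀ i, 0 < r i) (hcov : {p : Hpt 1 | p 0 = 0} ⊆ ⋃ i, uBall 1 (c i) (r i)) :
    ∑' i, ENNReal.ofReal (r i ^ (3 : ℝ)) = ⊤ := by
  simp only [Real.rpow_ofNat]
  refine tsum_eq_top_of_univ_subset_iUnion volume_univ_prod_eq_top (fun z _ => ?_)
    (by norm_num : (12 : ℝ≥0∞) ≠ ⊤) fun i =>
      (volume_Ioo_prod_Ioo_centered (c i 1) (c i 2 - 2 * c i 0 * c i 1) (hr i).le).le
  obtain ⟨i, hi⟩ := mem_iUnion.1 (hcov (show !₂[0, z.1, z.2] ∈ {p : Hpt 1 | p 0 = 0} by simp))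
  exact mem_iUnion.2 ⟨i, mem_rectangle_of_vertical_mem_uBall (hr i) hi⟩

theorem sMeas_vertical_plane : sMeas 1 3 {p : Hpt 1 | p 0 = 0} = ⊤ := by
  refine top_le_iff.1 (le_iSup₂_of_le 1 one_pos (le_iInf fun c => le_iInf fun r => ?_))
  exact le_iInf fun hc =>
    (tsum_rpow_three_eq_top_of_vertical_plane_subset (fun i => (hc.1 i).1) hc.2).ge

/-- the counterexample in `ℍ¹`: for `R = {x = 0}` and
`u = t - 2xy` one has `∇u = -4xY + T`, `∇_H u = -4xY`, the whole of `R`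
is characteristic, and `𝒮³(R) = ∞`. -/
theorem characteristic_counterexample_H1 :
    ∀ (x0 : Fin (2*1+1)) (y0 : Fin (2*1+1)) (t0 : Fin (2*1+1)),
    x0 = ⟨0, by omega⟩ → y0 = ⟨1, by omega⟩ → t0 = ⟨2, by omega⟩ →
    ∀ (R : Set (Hpt 1)) (u : Hpt 1 → ℝ),
    R = {p | p x0 = 0} → u = (fun p => p t0 - 2 * p x0 * p y0) →
    (∀ p : Hpt 1, fGrad 1 u p
        = mk 1 (fun i => if i.1 = 1 then -4 * p x0 else if i.1 = 2 then 1 else 0)) ∧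
    (∀ p : Hpt 1, hGrad 1 u p = mkH 1 (fun i => if i.1 = 1 then -4 * p x0 else 0)) ∧
    {p ∈ R | hGrad 1 u p = 0 ∧ fGrad 1 u p ≠ 0} = R ∧
    sMeas 1 3 R = ⊤ := by
  rintro _ _ _ rfl rfl rfl R u rfl rfl
  refine ⟨fGrad_tSubTwoXY, hGrad_tSubTwoXY, ?_, sMeas_vertical_plane⟩
  exact sep_eq_self_iff_mem_true.2 fun p hp =>
    ⟨(hGrad_tSubTwoXY_eq_zero_iff p).2 hp, fGrad_tSubTwoXY_ne_zero p⟩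

end Heis
end
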